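/- Let 0 < q < 1, let ν be a positive integer and let z ∈ ℂ. Then the function G_q^{(ν)}(t,z) := −((1−q)^ν/log q)·(ν−1)!·e^{t/(1−q)} − F_q^{−,ν}(t,z) satisfies G_q^{(ν)}(0,z) = −((1−q)^ν/log q)·(ν−1)! and, for every t ∈ ℂ, G_q^{(ν)}(q·t,z) = e^{−t}·( G_q^{(ν)}(t,z) + t^ν·q^{ν(1−z)}·e^{t·[1−z]_q} ). -/

import Mathlib

open Complex

/-- `q^w := exp(w · log q)` with the real logarithm of `q`. -/
noncomputable def qpow (q : ℝ) (w : ℂ) : ℂ := Complex.exp (w * Real.log q)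

/-- `[w]_q := (1 - q^w)/(1 - q)`. -/
noncomputable def qbr (q : ℝ) (w : ℂ) : ℂ := (1 - qpow q w) / (1 - (q : ℂ))

/-- the term of index `n+1` of the series defining `F_q^{-,ν}(t,z)`. -/
noncomputable def FmTerm (q : ℝ) (ν : ℕ) (t z : ℂ) (n : ℕ) : ℂ :=
  qpow q ((ν : ℂ) * (((n : ℂ) + 1) - z)) * Complex.exp (t * qbr q (((n : ℂ) + 1) - z))

/-- `F_q^{-,ν}(t,z)`. -/
noncomputable def Fm (q : ℝ) (ν : ℕ) (t z : ℂ) : ℂ := t ^ ν * ∑' n : ℕ, FmTerm q ν t z n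

/-- `G_q^{(ν)}(t,z) := −((1−q)^ν/log q)·(ν−1)!·e^{t/(1−q)} − F_q^{−,ν}(t,z)`. -/
noncomputable def Gq (q : ℝ) (ν : ℕ) (t z : ℂ) : ℂ :=
  -((((1 - q) ^ ν : ℝ) : ℂ) / (Real.log q : ℂ)) * (Nat.factorial (ν - 1) : ℂ) *
    Complex.exp (t / (1 - (q : ℂ))) - Fm q ν t z

/-! Substituting `t ↦ q t` in `F_q^{-,ν}(t,z)` shifts the series by one index at the cost of a
factor `e^{-t}`, because `q [w]_q + 1 = [w + 1]_q`; the lost first term is the inhomogeneity.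
The exponential part of `G_q^{(ν)}` obeys the same law, since `q t/(1-q) = t/(1-q) - t`. -/

section

variable {q : ℝ}

theorem qpow_add (a b : ℂ) : qpow q (a + b) = qpow q a * qpow q b := by
  rw [qpow, qpow, qpow, add_mul, Complex.exp_add]

theorem qpow_natCast (hq0 : 0 < q) (n : ℕ) : qpow q n = (q : ℂ) ^ n := by
  rw [qpow, Complex.exp_nat_mul, ← Complex.ofReal_exp, Real.exp_log hq0]

theorem qpow_natCast_add (hq0 : 0 < q) (n : ℕ) (w : ℂ) :
    qpow q (n + w) = (q : ℂ) ^ n * qpow q w := by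
  rw [qpow_add, qpow_natCast hq0]

theorem one_sub_ofReal_ne_zero (hq1 : q ≠ 1) : (1 : ℂ) - q ≠ 0 :=
  sub_ne_zero.2 (by exact_mod_cast hq1.symm)

theorem qbr_add_one (hq0 : 0 < q) (hq1 : q ≠ 1) (w : ℂ) :
    qbr q (w + 1) = 1 + q * qbr q w := by
  have hq : qpow q 1 = q := by simpa using qpow_natCast hq0 1
  have hne := one_sub_ofReal_ne_zero hq1
  rw [qbr, qbr, qpow_add, hq]
  field_simp
  ring

theorem norm_qbr_natCast_add_le (hq0 : 0 < q) (hq1 : q < 1) (n : ℕ) (w : ℂ) :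
    ‖qbr q (n + w)‖ ≤ (1 + ‖qpow q w‖) / (1 - q) := by
  have hden : ‖(1 : ℂ) - q‖ = 1 - q := by
    rw [← Complex.ofReal_one, ← Complex.ofReal_sub, Complex.norm_real,
      Real.norm_of_nonneg (by linarith)]
  have hqn : ‖(q : ℂ) ^ n‖ ≤ 1 := by
    rw [norm_pow, Complex.norm_real, Real.norm_of_nonneg hq0.le]
    exact pow_le_one₀ hq0.le hq1.le
  rw [qbr, norm_div, hden, qpow_natCast_add hq0]
  gcongr
  calc ‖1 - (q : ℂ) ^ n * qpow q w‖ ≤ 1 + ‖(q : ℂ) ^ n‖ * ‖qpow q w‖ := by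
        simpa [norm_mul] using norm_sub_le (1 : ℂ) ((q : ℂ) ^ n * qpow q w)
    _ ≤ 1 + ‖qpow q w‖ := by
        gcongr
        exact mul_le_of_le_one_left (norm_nonneg _) hqn

theorem norm_FmTerm_le (hq0 : 0 < q) (hq1 : q < 1) (ν : ℕ) (t z : ℂ) (n : ℕ) :
    ‖FmTerm q ν t z n‖ ≤ ‖qpow q (ν * (1 - z))‖ *
      Real.exp (‖t‖ * ((1 + ‖qpow q (1 - z)‖) / (1 - q))) * (q ^ ν) ^ n := by
  have hpow : qpow q (ν * (n + 1 - z)) = (q : ℂ) ^ (ν * n) * qpow q (ν * (1 - z)) := by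
    rw [← qpow_natCast_add hq0]
    push_cast
    ring_nf
  have hexp : ‖Complex.exp (t * qbr q (n + 1 - z))‖ ≤
      Real.exp (‖t‖ * ((1 + ‖qpow q (1 - z)‖) / (1 - q))) := by
    rw [Complex.norm_exp, Real.exp_le_exp]
    calc (t * qbr q (n + 1 - z)).re ≤ ‖t‖ * ‖qbr q (n + (1 - z))‖ := by
          rw [← add_sub_assoc, ← norm_mul]
          exact Complex.re_le_norm _
      _ ≤ _ := by
          gcongr
          exact norm_qbr_natCast_add_le hq0 hq1 n (1 - z)
  rw [FmTerm, norm_mul, hpow, norm_mul, norm_pow, Complex.norm_real,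
    Real.norm_of_nonneg hq0.le, pow_mul]
  calc _ ≤ (q ^ ν) ^ n * ‖qpow q (ν * (1 - z))‖ *
        Real.exp (‖t‖ * ((1 + ‖qpow q (1 - z)‖) / (1 - q))) := by gcongr
    _ = _ := by ring

theorem summable_FmTerm (hq0 : 0 < q) (hq1 : q < 1) {ν : ℕ} (hν : ν ≠ 0) (t z : ℂ) :
    Summable (FmTerm q ν t z) :=
  Summable.of_norm_bounded
    ((summable_geometric_of_lt_one (by positivity) (pow_lt_one₀ hq0.le hq1 hν)).mul_left _)
    (norm_FmTerm_le hq0 hq1 ν t z)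

theorem pow_mul_FmTerm_mul_left (hq0 : 0 < q) (hq1 : q ≠ 1) (ν : ℕ) (t z : ℂ) (n : ℕ) :
    (q : ℂ) ^ ν * FmTerm q ν (q * t) z n = Complex.exp (-t) * FmTerm q ν t z (n + 1) := by
  have hshift : ((n + 1 : ℕ) : ℂ) + 1 - z = (n + 1 - z) + 1 := by push_cast; ring
  have hpow : qpow q (ν * ((n + 1 - z) + 1)) = (q : ℂ) ^ ν * qpow q (ν * (n + 1 - z)) := by
    rw [← qpow_natCast_add hq0]
    ring_nf
  have hexp : Complex.exp (t * qbr q ((n + 1 - z) + 1)) =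
      Complex.exp t * Complex.exp (q * t * qbr q (n + 1 - z)) := by
    rw [qbr_add_one hq0 hq1, ← Complex.exp_add]
    ring_nf
  have hinv : Complex.exp (-t) * Complex.exp t = 1 := by
    rw [← Complex.exp_add, neg_add_cancel, Complex.exp_zero]
  rw [FmTerm, FmTerm, hshift, hpow, hexp]
  linear_combination (-((q : ℂ) ^ ν * qpow q (ν * (n + 1 - z)) *
    Complex.exp (q * t * qbr q (n + 1 - z)))) * hinv

theorem Fm_mul_left (hq0 : 0 < q) (hq1 : q < 1) {ν : ℕ} (hν : ν ≠ 0) (t z : ℂ) :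
    Fm q ν (q * t) z = Complex.exp (-t) * (Fm q ν t z - t ^ ν * FmTerm q ν t z 0) := by
  have htail : ∑' n, FmTerm q ν t z (n + 1) = ∑' n, FmTerm q ν t z n - FmTerm q ν t z 0 := by
    rw [(summable_FmTerm hq0 hq1 hν t z).tsum_eq_zero_add]
    ring
  calc Fm q ν (q * t) z = t ^ ν * ∑' n, (q : ℂ) ^ ν * FmTerm q ν (q * t) z n := by
        rw [Fm, tsum_mul_left, mul_pow]
        ring
    _ = t ^ ν * ∑' n, Complex.exp (-t) * FmTerm q ν t z (n + 1) := by
        simp only [pow_mul_FmTerm_mul_left hq0 hq1.ne]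
    _ = _ := by
        rw [tsum_mul_left, htail, Fm]
        ring

end

theorem stmt10 (q : ℝ) (hq0 : 0 < q) (hq1 : q < 1) (ν : ℕ) (hν : 0 < ν) (z : ℂ) :
    Gq q ν 0 z = -((((1 - q) ^ ν : ℝ) : ℂ) / (Real.log q : ℂ)) * (Nat.factorial (ν - 1) : ℂ) ∧
    ∀ t : ℂ, Gq q ν ((q : ℂ) * t) z =
      Complex.exp (-t) *
        (Gq q ν t z + t ^ ν * qpow q ((ν : ℂ) * (1 - z)) * Complex.exp (t * qbr q (1 - z))) := by
  refine ⟨by simp [Gq, Fm, zero_pow hν.ne'], fun t => ?_⟩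
  have hFmTerm_zero : FmTerm q ν t z 0 = qpow q (ν * (1 - z)) * Complex.exp (t * qbr q (1 - z)) := by
    simp [FmTerm]
  have hexp : Complex.exp (q * t / (1 - q)) = Complex.exp (-t) * Complex.exp (t / (1 - q)) := by
    have hne := one_sub_ofReal_ne_zero hq1.ne
    rw [← Complex.exp_add]
    congr 1
    field_simp
    ring
  rw [Gq, Gq, Fm_mul_left hq0 hq1 hν.ne', hexp, hFmTerm_zero]
  ring
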